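/- For every real inner product on su(2) there exists a normalized frame: an orthonormal basis X₁, X₂, X₃ of su(2) and real numbers λ₁, λ₂, λ₃ such that [X₂, X₃] = λ₁ X₁, [X₃, X₁] = λ₂ X₂, and [X₁, X₂] = λ₃ X₃. -/

import Mathlib

open Matrix

/-!
The linear isomorphism `su2OfVec : ℝ³ → su(2)` turns the bracket into twice the cross product,
and pulls the inner product back to `u ⬝ᵥ G *ᵥ v` for a positive definite matrix `G`. A
dot-orthonormal eigenbasis of `G`, rescaled by the inverse square roots of the eigenvalues, is
orthonormal for `G` and still pairwise dot-orthogonal. For such a triple the cross product of two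
vectors is a multiple of the third: if `u, v ⟂ w` then `(u ⨯₃ v) ⨯₃ w = (u ⬝ᵥ w) v - (v ⬝ᵥ w) u = 0`.
-/

theorem cross_eq_smul_of_dotProduct_eq_zero {K : Type*} [Field K] {u v w : Fin 3 → K}
    (hu : u ⬝ᵥ w = 0) (hv : v ⬝ᵥ w = 0) (hw : w ⬝ᵥ w ≠ 0) :
    u ⨯₃ v = ((u ⨯₃ v ⬝ᵥ w) / (w ⬝ᵥ w)) • w := by
  have hpar : u ⨯₃ v ⨯₃ w = 0 := by
    rw [cross_cross_eq_smul_sub_smul, hu, hv, zero_smul, zero_smul, sub_zero]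
  have hsmul : (w ⬝ᵥ w) • u ⨯₃ v = (u ⨯₃ v ⬝ᵥ w) • w := by
    have := cross_cross_eq_smul_sub_smul' w (u ⨯₃ v) w
    rwa [hpar, map_zero, eq_comm, sub_eq_zero] at this
  rw [div_eq_inv_mul, mul_smul, ← hsmul, smul_smul, inv_mul_cancel₀ hw, one_smul]

theorem Matrix.PosDef.exists_simultaneously_orthogonal_frame {n : Type*} [Fintype n]
    [DecidableEq n] {G : Matrix n n ℝ} (hG : G.PosDef) :
    ∃ p : n → n → ℝ, Pairwise (fun i j => p i ⬝ᵥ p j = 0) ∧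
      ∀ i j, p i ⬝ᵥ G *ᵥ p j = if i = j then 1 else 0 := by
  have hq : ∀ i j, (hG.1.eigenvectorBasis i : n → ℝ) ⬝ᵥ hG.1.eigenvectorBasis j =
      if i = j then 1 else 0 := fun i j => by
    simpa [EuclideanSpace.inner_eq_star_dotProduct, dotProduct_comm] using
      orthonormal_iff_ite.mp hG.1.eigenvectorBasis.orthonormal i j
  refine ⟨fun i => (√(hG.1.eigenvalues i))⁻¹ • (hG.1.eigenvectorBasis i : n → ℝ),
    fun i j hij => ?_, fun i j => ?_⟩
  · simp [smul_dotProduct, dotProduct_smul, hq, hij]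
  · rw [mulVec_smul, hG.1.mulVec_eigenvectorBasis]
    simp only [smul_dotProduct, dotProduct_smul, hq, smul_eq_mul]
    split_ifs with h
    · subst h
      have hμ := hG.eigenvalues_pos i
      field_simp
      rw [Real.sq_sqrt hμ.le]
    · simp

theorem LinearMap.BilinForm.posDef_toMatrix₂' {n : Type*} [Fintype n] [DecidableEq n]
    {B : LinearMap.BilinForm ℝ (n → ℝ)} (hsymm : ∀ u v, B u v = B v u)
    (hpos : ∀ v, v ≠ 0 → 0 < B v v) : (LinearMap.toMatrix₂' ℝ B).PosDef := by
  refine .of_dotProduct_mulVec_pos ?_ fun v hv => ?_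
  · ext i j
    simp [LinearMap.toMatrix₂'_apply, hsymm]
  · simpa [← Matrix.toLinearMap₂'_apply'] using hpos v hv

noncomputable def su2OfVec : (Fin 3 → ℝ) →ₗ[ℝ] Matrix (Fin 2) (Fin 2) ℂ where
  toFun v := !![v 0 * Complex.I, v 1 + v 2 * Complex.I; -v 1 + v 2 * Complex.I, -v 0 * Complex.I]
  map_add' u v := by
    ext i j; fin_cases i <;> fin_cases j <;> simp [add_mul, add_add_add_comm, add_comm]
  map_smul' r v := by
    ext i j; fin_cases i <;> fin_cases j <;> simp [mul_assoc]

theorem su2OfVec_conjTranspose (v : Fin 3 → ℝ) : (su2OfVec v)ᴴ = -su2OfVec v := by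
  ext i j; fin_cases i <;> fin_cases j <;> simp [su2OfVec, Complex.ext_iff]

theorem su2OfVec_trace (v : Fin 3 → ℝ) : (su2OfVec v).trace = 0 := by
  simp [su2OfVec, trace_fin_two]

theorem su2OfVec_injective : Function.Injective su2OfVec := by
  refine (injective_iff_map_eq_zero _).mpr fun v hv => ?_
  have h00 := congr_arg Complex.im (congr_fun₂ hv 0 0)
  have h01 := congr_fun₂ hv 0 1
  simp [su2OfVec] at h00
  simp [su2OfVec, Complex.ext_iff] at h01
  ext k; fin_cases k
  · exact h00
  · exact h01.1
  · exact h01.2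

theorem exists_su2OfVec_eq {A : Matrix (Fin 2) (Fin 2) ℂ} (hA : Aᴴ = -A) (ht : A.trace = 0) :
    ∃ v, su2OfVec v = A := by
  have h00 : (A 0 0).re = 0 := by
    have := congr_arg Complex.re (congr_fun₂ hA 0 0)
    simp only [conjTranspose_apply, RCLike.star_def, Complex.conj_re, Matrix.neg_apply,
      Complex.neg_re] at this
    linarith
  have h10 : A 1 0 = -star (A 0 1) := by
    simpa [eq_neg_iff_add_eq_zero, add_comm] using congr_arg star (congr_fun₂ hA 0 1)
  have h11 : A 1 1 = -A 0 0 := by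
    rw [trace_fin_two] at ht; linear_combination ht
  refine ⟨![(A 0 0).im, (A 0 1).re, (A 0 1).im], ?_⟩
  ext i j; fin_cases i <;> fin_cases j <;> simp [su2OfVec, h10, h11, Complex.ext_iff, h00]

theorem su2OfVec_bracket (u v : Fin 3 → ℝ) :
    su2OfVec u * su2OfVec v - su2OfVec v * su2OfVec u = (2 : ℝ) • su2OfVec (u ⨯₃ v) := by
  ext i j; fin_cases i <;> fin_cases j <;>
    simp [su2OfVec, cross_apply, Complex.ext_iff] <;> constructor <;> ring

theorem su2OfVec_bracket_eq_smul {u v w : Fin 3 → ℝ} (hu : u ⬝ᵥ w = 0) (hv : v ⬝ᵥ w = 0)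
    (hw : w ≠ 0) : ∃ l : ℝ, su2OfVec u * su2OfVec v - su2OfVec v * su2OfVec u = l • su2OfVec w := by
  obtain ⟨l, hl⟩ : ∃ l : ℝ, u ⨯₃ v = l • w :=
    ⟨_, cross_eq_smul_of_dotProduct_eq_zero hu hv (dotProduct_self_eq_zero.not.mpr hw)⟩
  exact ⟨2 * l, by rw [su2OfVec_bracket, hl, map_smul, smul_smul]⟩

theorem exists_normalized_frame
    (B : Matrix (Fin 2) (Fin 2) ℂ →ₗ[ℝ] Matrix (Fin 2) (Fin 2) ℂ →ₗ[ℝ] ℝ)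
    (hsymm : ∀ A A' : Matrix (Fin 2) (Fin 2) ℂ, B A A' = B A' A)
    (hpos : ∀ A : Matrix (Fin 2) (Fin 2) ℂ, Aᴴ = -A → A.trace = 0 → A ≠ 0 → 0 < B A A) :
    ∃ X : Fin 3 → Matrix (Fin 2) (Fin 2) ℂ,
      (∀ i, (X i)ᴴ = -X i ∧ (X i).trace = 0) ∧
      LinearIndependent ℝ X ∧
      (∀ A : Matrix (Fin 2) (Fin 2) ℂ, Aᴴ = -A → A.trace = 0 →
        A ∈ Submodule.span ℝ (Set.range X)) ∧
      (∀ i j, B (X i) (X j) = if i = j then 1 else 0) ∧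
      ∃ l₁ l₂ l₃ : ℝ,
        X 1 * X 2 - X 2 * X 1 = l₁ • X 0 ∧
        X 2 * X 0 - X 0 * X 2 = l₂ • X 1 ∧
        X 0 * X 1 - X 1 * X 0 = l₃ • X 2 := by
  set G := LinearMap.toMatrix₂' ℝ (B.compl₁₂ su2OfVec su2OfVec)
  have hBG : ∀ u v, B (su2OfVec u) (su2OfVec v) = u ⬝ᵥ G *ᵥ v := fun u v => by
    rw [← Matrix.toLinearMap₂'_apply', Matrix.toLinearMap₂'_toMatrix']
    rfl
  have hG : G.PosDef := LinearMap.BilinForm.posDef_toMatrix₂' (fun _ _ => hsymm _ _)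
    fun v hv => hpos _ (su2OfVec_conjTranspose v) (su2OfVec_trace v)
      ((map_ne_zero_iff _ su2OfVec_injective).mpr hv)
  obtain ⟨p, hp_orth, hp_G⟩ := hG.exists_simultaneously_orthogonal_frame
  have hX : ∀ i j, B (su2OfVec (p i)) (su2OfVec (p j)) = if i = j then 1 else 0 :=
    fun i j => (hBG _ _).trans (hp_G i j)
  have hp_ne : ∀ k, p k ≠ 0 := fun k hk => by simpa [hk] using hp_G k k
  have hX_li : LinearIndependent ℝ (su2OfVec ∘ p) :=
    LinearMap.BilinForm.linearIndependent_of_iIsOrtho (B := B)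
      (LinearMap.BilinForm.iIsOrtho_def.mpr fun i j hij => by simp [hX, hij]) fun i => by simp [hX]
  have hp_span : Submodule.span ℝ (Set.range p) = ⊤ :=
    (hX_li.of_comp _).span_eq_top_of_card_eq_finrank' (by simp)
  obtain ⟨l₁, h₁⟩ := su2OfVec_bracket_eq_smul (hp_orth (by decide : (1 : Fin 3) ≠ 0))
    (hp_orth (by decide : (2 : Fin 3) ≠ 0)) (hp_ne 0)
  obtain ⟨l₂, h₂⟩ := su2OfVec_bracket_eq_smul (hp_orth (by decide : (2 : Fin 3) ≠ 1))
    (hp_orth (by decide : (0 : Fin 3) ≠ 1)) (hp_ne 1)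
  obtain ⟨l₃, h₃⟩ := su2OfVec_bracket_eq_smul (hp_orth (by decide : (0 : Fin 3) ≠ 2))
    (hp_orth (by decide : (1 : Fin 3) ≠ 2)) (hp_ne 2)
  refine ⟨su2OfVec ∘ p, fun i => ⟨su2OfVec_conjTranspose _, su2OfVec_trace _⟩, hX_li,
    fun A hA ht => ?_, hX, l₁, l₂, l₃, h₁, h₂, h₃⟩
  obtain ⟨v, rfl⟩ := exists_su2OfVec_eq hA ht
  rw [Set.range_comp]
  exact Submodule.apply_mem_span_image_of_mem_span _ (hp_span ▸ Submodule.mem_top)
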